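/- arXiv:0909.2782 — 6 statements merged into one kernel-verified Lean document; each statement's English description precedes it below -/
import Mathlib

section
/- Let G be a connected simple graph on n vertices. For each unordered pair of distinct vertices u,v fix a shortest path P_{uv}, and for each edge k define the connection-graph-stability score C_k as the sum of |P_{uv}| over all pairs {u,v} whose chosen path uses edge k. Then the algebraic connectivity λ₂ (second smallest eigenvalue of the Laplacian) satisfies λ₂ ≥ n / C_max, where C_max = max over edges k of C_k. -/
/-
For `x` orthogonal to the constant vector, Cauchy–Schwarz along the chosen path gives
`(x u - x v)² ≤ |P_uv| · Σ_{ij ∈ P_uv} (x i - x j)²`. Summing over all pairs `u, v` and exchanging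
the order of summation, the left side becomes `2n‖x‖²` and each edge `k` collects the weight `2 C_k`,
so `n‖x‖² ≤ C_max · xᵀ L x`. Applied to unit eigenvectors, every nonzero eigenvalue of `L` is at
least `n / C_max`; for a connected graph the eigenvalue `0` is simple (its eigenspace is spanned
by the constant vector), so `λ₂` is nonzero.
-/

open SimpleGraph Finset

/-- The algebraic connectivity: the second smallest eigenvalue of the Laplacian matrix. -/
noncomputable def algebraicConnectivity {n : ℕ} (G : SimpleGraph (Fin n))
    [DecidableRel G.Adj] : ℝ :=
  if h : 1 < n then
    (((G.posSemidef_lapMatrix ℝ).1.eigenvalues) ∘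
      (Tuple.sort ((G.posSemidef_lapMatrix ℝ).1.eigenvalues))) ⟨1, h⟩
  else 0

/-- A fixed system of shortest paths, one for each (ordered) pair of vertices. -/
structure ShortestPathSystem {n : ℕ} (G : SimpleGraph (Fin n)) where
  path : ∀ u v : Fin n, G.Walk u v
  isPath : ∀ u v : Fin n, (path u v).IsPath
  length_eq : ∀ u v : Fin n, (path u v).length = G.dist u v

/-- The connection-graph-stability score of an edge `e`: half the double sum over ordered
pairs of vertices of the length of the chosen shortest path, if it passes through `e`. -/
noncomputable def cgsScore {n : ℕ} {G : SimpleGraph (Fin n)} (P : ShortestPathSystem G)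
    (e : Sym2 (Fin n)) : ℝ :=
  (1/2) * ∑ u : Fin n, ∑ v : Fin n,
    (if e ∈ (P.path u v).edges then ((P.path u v).length : ℝ) else 0)

/-- The squared difference of `x` across an edge. -/
noncomputable def edgeSq {V : Type*} (x : V → ℝ) : Sym2 V → ℝ :=
  Sym2.lift ⟨fun a b => (x a - x b)^2, fun a b => by ring_nf⟩

open Matrix

@[simp] lemma edgeSq_mk {V : Type*} (x : V → ℝ) (a b : V) : edgeSq x s(a, b) = (x a - x b) ^ 2 :=
  rfl

lemma edgeSq_nonneg {V : Type*} (x : V → ℝ) (e : Sym2 V) : 0 ≤ edgeSq x e := by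
  induction e using Sym2.ind with
  | _ a b => exact sq_nonneg _

/-- The inductive step of Cauchy–Schwarz along a walk, with `L` the length of the remaining walk. -/
lemma sq_add_le_add_one_mul {L T s t : ℝ} (hL : 0 ≤ L) (hT : 0 ≤ T) (ht : t ^ 2 ≤ L * T) :
    (s + t) ^ 2 ≤ (L + 1) * (s ^ 2 + T) := by
  rcases hL.eq_or_lt with rfl | hL
  · nlinarith [sq_nonneg t]
  · nlinarith [sq_nonneg (L * s - t), mul_nonneg (by linarith : (0:ℝ) ≤ L + 1)
      (by linarith : (0:ℝ) ≤ L * T - t ^ 2)]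

namespace SimpleGraph

variable {V : Type*} {G : SimpleGraph V}

theorem Walk.sq_sub_le_length_mul_sum_edgeSq (x : V → ℝ) {u v : V} (w : G.Walk u v) :
    (x u - x v) ^ 2 ≤ w.length * (w.edges.map (edgeSq x)).sum := by
  induction w with
  | nil => simp
  | @cons a b c _ w ih =>
    have hT : 0 ≤ (w.edges.map (edgeSq x)).sum :=
      List.sum_nonneg (by simpa using fun e _ => edgeSq_nonneg x e)
    simpa [add_comm (x a - x b), sub_add_sub_cancel'] using
      sq_add_le_add_one_mul (s := x a - x b) (Nat.cast_nonneg w.length) hT ih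

variable [Fintype V] [DecidableRel G.Adj]

theorem sum_darts_eq_sum_sum_adj {M : Type*} [AddCommMonoid M] (f : V → V → M) :
    ∑ d : G.Dart, f d.fst d.snd = ∑ i, ∑ j, if G.Adj i j then f i j else 0 := by
  classical
  rw [← Finset.sum_product', ← Finset.sum_filter]
  refine Finset.sum_bij' (fun d _ => d.toProd) (fun p hp => ⟨p, (Finset.mem_filter.1 hp).2⟩)
    ?_ ?_ ?_ ?_ ?_ <;> intros <;> simp_all

variable [DecidableEq V]

theorem Walk.IsPath.sum_map_edges_eq_sum_edgeFinset {u v : V} {w : G.Walk u v} (hw : w.IsPath)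
    {M : Type*} [AddCommMonoid M] (f : Sym2 V → M) :
    (w.edges.map f).sum = ∑ e ∈ G.edgeFinset, if e ∈ w.edges then f e else 0 := by
  rw [← List.sum_toFinset f hw.edges_nodup, ← Finset.sum_filter]
  congr 1
  ext e
  simpa using fun he => w.edges_subset_edgeSet he

theorem sum_darts_edge_eq_two_smul {M : Type*} [AddCommMonoid M]
    (f : Sym2 V → M) : ∑ d : G.Dart, f d.edge = 2 • ∑ e ∈ G.edgeFinset, f e := by
  rw [← Finset.sum_fiberwise_of_maps_to (g := Dart.edge) fun d _ => mem_edgeFinset.2 d.edge_mem,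
    Finset.smul_sum]
  refine Finset.sum_congr rfl fun e he => ?_
  rw [Finset.sum_congr rfl fun d hd => by rw [(Finset.mem_filter.1 hd).2], Finset.sum_const,
    G.dart_edge_fiber_card e (mem_edgeFinset.1 he)]

theorem dotProduct_lapMatrix_mulVec_eq_sum_edgeSq (x : V → ℝ) :
    x ⬝ᵥ (G.lapMatrix ℝ *ᵥ x) = ∑ e ∈ G.edgeFinset, edgeSq x e := by
  rw [← toLinearMap₂'_apply', lapMatrix_toLinearMap₂', ← sum_darts_eq_sum_sum_adj]
  change (∑ d : G.Dart, edgeSq x d.edge) / 2 = _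
  rw [sum_darts_edge_eq_two_smul, two_smul, add_self_div_two]

theorem sum_eq_zero_of_lapMatrix_mulVec_eq_smul {x : V → ℝ} {μ : ℝ} (hμ : μ ≠ 0)
    (hx : G.lapMatrix ℝ *ᵥ x = μ • x) : ∑ i, x i = 0 := by
  have h : (fun _ => 1 : V → ℝ) ⬝ᵥ (G.lapMatrix ℝ *ᵥ x) = 0 := by
    rw [dotProduct_mulVec, ← mulVec_transpose, (G.isSymm_lapMatrix (R := ℝ)).eq,
      lapMatrix_mulVec_const_eq_zero, zero_dotProduct]
  rw [hx, dotProduct_smul, smul_eq_mul] at h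
  simpa [dotProduct, hμ] using h

theorem card_eigenvalues_lapMatrix_eq_zero (hG : G.Connected) :
    Fintype.card {i // (G.posSemidef_lapMatrix ℝ).1.eigenvalues i = 0} = 1 := by
  have hker : Module.finrank ℝ (LinearMap.ker (G.lapMatrix ℝ).mulVecLin) = 1 := by
    have := hG.preconnected.subsingleton_connectedComponent
    obtain ⟨v⟩ := hG.nonempty
    rw [← toLin'_apply', ← G.card_connectedComponent_eq_finrank_ker_toLin'_lapMatrix]
    exact Fintype.card_eq_one_iff.2 ⟨G.connectedComponentMk v, fun _ => Subsingleton.elim _ _⟩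
  -- rank–nullity, with the rank counted by the nonzero eigenvalues
  have hrank := (G.lapMatrix ℝ).mulVecLin.finrank_range_add_finrank_ker
  rw [← Matrix.rank, (G.posSemidef_lapMatrix ℝ).1.rank_eq_card_non_zero_eigs, hker,
    Module.finrank_fintype_fun_eq_card, Fintype.card_subtype_compl] at hrank
  have := Fintype.card_subtype_le fun i => (G.posSemidef_lapMatrix ℝ).1.eigenvalues i = 0
  omega

end SimpleGraph

theorem sum_sum_sub_sq_eq_of_sum_eq_zero {ι : Type*} [Fintype ι] {x : ι → ℝ} (hx : ∑ i, x i = 0) :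
    ∑ i, ∑ j, (x i - x j) ^ 2 = 2 * Fintype.card ι * ∑ i, x i ^ 2 := by
  simp only [sub_sq, Finset.sum_add_distrib, Finset.sum_sub_distrib, ← Finset.mul_sum,
    ← Finset.sum_mul, hx, Finset.sum_const, Finset.card_univ, nsmul_eq_mul]
  ring

theorem le_comp_sort_one_of_forall_eq_or_le {α : Type*} [LinearOrder α] {n : ℕ} (f : Fin n → α)
    (hn : 1 < n) {a c : α} (ha : ∀ i, a ≤ f i) (hsimple : ∀ i j, f i = a → f j = a → i = j)
    (hgap : ∀ i, f i = a ∨ c ≤ f i) : c ≤ (f ∘ Tuple.sort f) ⟨1, hn⟩ := by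
  refine (hgap _).resolve_left fun h1 => ?_
  have h0 : (f ∘ Tuple.sort f) ⟨0, by omega⟩ = a :=
    le_antisymm (h1 ▸ Tuple.monotone_sort f (Fin.mk_le_mk.2 zero_le_one)) (ha _)
  simpa using (Tuple.sort f).injective (hsimple _ _ h0 h1)

theorem ShortestPathSystem.sum_sum_length_mul_eq_two_mul_sum_cgsScore_mul {n : ℕ}
    {G : SimpleGraph (Fin n)} [DecidableRel G.Adj] (P : ShortestPathSystem G)
    (g : Sym2 (Fin n) → ℝ) :
    ∑ u, ∑ v, ((P.path u v).length : ℝ) *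
        ∑ e ∈ G.edgeFinset, (if e ∈ (P.path u v).edges then g e else 0) =
      2 * ∑ e ∈ G.edgeFinset, cgsScore P e * g e := by
  have h : ∀ e, 2 * cgsScore P e * g e =
      ∑ u, ∑ v, if e ∈ (P.path u v).edges then ((P.path u v).length : ℝ) * g e else 0 := by
    intro e
    simp only [cgsScore, ← mul_assoc, mul_one_div_cancel (two_ne_zero' ℝ), one_mul,
      Finset.sum_mul, ite_mul, zero_mul]
  simp only [Finset.mul_sum, ← mul_assoc, h, mul_ite, mul_zero]
  conv_rhs => rw [Finset.sum_comm]
  exact Finset.sum_congr rfl fun u _ => Finset.sum_comm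

theorem card_mul_dotProduct_le_mul_dotProduct_lapMatrix {n : ℕ} {G : SimpleGraph (Fin n)}
    [DecidableRel G.Adj] (P : ShortestPathSystem G) {Cmax : ℝ}
    (hC : Cmax ∈ upperBounds (cgsScore P '' G.edgeSet)) {x : Fin n → ℝ} (hx : ∑ i, x i = 0) :
    n * (x ⬝ᵥ x) ≤ Cmax * (x ⬝ᵥ (G.lapMatrix ℝ *ᵥ x)) := by
  have hpath : ∀ u v, (x u - x v) ^ 2 ≤ (P.path u v).length *
      ∑ e ∈ G.edgeFinset, (if e ∈ (P.path u v).edges then edgeSq x e else 0) := fun u v =>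
    (P.isPath u v).sum_map_edges_eq_sum_edgeFinset (edgeSq x) ▸
      (P.path u v).sq_sub_le_length_mul_sum_edgeSq x
  have hscore : ∀ e ∈ G.edgeFinset, cgsScore P e * edgeSq x e ≤ Cmax * edgeSq x e :=
    fun e he => mul_le_mul_of_nonneg_right (hC ⟨e, mem_edgeFinset.1 he, rfl⟩) (edgeSq_nonneg x e)
  calc (n : ℝ) * (x ⬝ᵥ x) = (∑ u, ∑ v, (x u - x v) ^ 2) / 2 := by
        rw [sum_sum_sub_sq_eq_of_sum_eq_zero hx, Fintype.card_fin, dotProduct]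
        simp only [sq]
        ring
    _ ≤ (∑ u, ∑ v, ((P.path u v).length : ℝ) *
        ∑ e ∈ G.edgeFinset, (if e ∈ (P.path u v).edges then edgeSq x e else 0)) / 2 := by
        gcongr with u _ v _
        exact hpath u v
    _ = ∑ e ∈ G.edgeFinset, cgsScore P e * edgeSq x e := by
        rw [P.sum_sum_length_mul_eq_two_mul_sum_cgsScore_mul, mul_div_cancel_left₀ _ two_ne_zero]
    _ ≤ Cmax * (x ⬝ᵥ (G.lapMatrix ℝ *ᵥ x)) := by
        rw [dotProduct_lapMatrix_mulVec_eq_sum_edgeSq, Finset.mul_sum]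
        exact Finset.sum_le_sum hscore

theorem eigenvalues_lapMatrix_eq_zero_or_div_le {n : ℕ} {G : SimpleGraph (Fin n)}
    [DecidableRel G.Adj] (P : ShortestPathSystem G) {Cmax : ℝ}
    (hC : Cmax ∈ upperBounds (cgsScore P '' G.edgeSet)) (i : Fin n) :
    (G.posSemidef_lapMatrix ℝ).1.eigenvalues i = 0 ∨
      n / Cmax ≤ (G.posSemidef_lapMatrix ℝ).1.eigenvalues i := by
  set hL := (G.posSemidef_lapMatrix ℝ).1
  set x := ⇑(hL.eigenvectorBasis i)
  have hμ : hL.eigenvalues i = x ⬝ᵥ (G.lapMatrix ℝ *ᵥ x) := by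
    simp [hL.eigenvalues_eq, x]
  have hx : x ⬝ᵥ x = 1 := by
    have h := real_inner_self_eq_norm_sq (hL.eigenvectorBasis i)
    rw [hL.eigenvectorBasis.orthonormal.1 i, EuclideanSpace.inner_eq_star_dotProduct] at h
    simpa using h
  rcases eq_or_ne (hL.eigenvalues i) 0 with h0 | h0
  · exact Or.inl h0
  right
  have hnonneg := (G.posSemidef_lapMatrix ℝ).eigenvalues_nonneg i
  rcases le_or_gt Cmax 0 with hC0 | hC0
  · exact (div_nonpos_of_nonneg_of_nonpos n.cast_nonneg hC0).trans hnonneg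
  have key := card_mul_dotProduct_le_mul_dotProduct_lapMatrix P hC
    (G.sum_eq_zero_of_lapMatrix_mulVec_eq_smul h0 (hL.mulVec_eigenvectorBasis i))
  rw [hx, ← hμ, mul_one, mul_comm] at key
  exact div_le_of_le_mul₀ hC0.le hnonneg key

/-- The connection-graph-stability lower bound for the algebraic connectivity:
`λ₂ ≥ n / C_max`. -/
theorem algebraicConnectivity_ge_div_cgsScore_max {n : ℕ} (G : SimpleGraph (Fin n))
    [DecidableRel G.Adj] (hG : G.Connected) (hn : 2 ≤ n)
    (P : ShortestPathSystem G) (Cmax : ℝ)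
    (hC : IsGreatest (cgsScore P '' G.edgeSet) Cmax) :
    (n : ℝ) / Cmax ≤ algebraicConnectivity G := by
  have hsimple := Fintype.card_le_one_iff.1 (card_eigenvalues_lapMatrix_eq_zero hG).le
  have hn' : 1 < n := hn
  rw [algebraicConnectivity, dif_pos hn']
  exact le_comp_sort_one_of_forall_eq_or_le _ hn' (G.posSemidef_lapMatrix ℝ).eigenvalues_nonneg
    (fun i j hi hj => congrArg Subtype.val (hsimple ⟨i, hi⟩ ⟨j, hj⟩))
    (eigenvalues_lapMatrix_eq_zero_or_div_le P hC.2)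
end

section
/- For any connected simple graph G with n vertices, diameter D_max, and maximum connection-graph-stability score C_max, the bound n / C_max ≥ 4 / (n · D_max) holds; i.e., the connection-graph-stability lower bound on λ₂ is always at least as good as Mohar's bound 4/(n D_max). -/
open SimpleGraph Finset

lemma dart_split {V : Type*} {G : SimpleGraph V} {u v : V} (w : G.Walk u v) (d : G.Dart)
    (hd : d ∈ w.darts) : ∃ (w1 : G.Walk u d.toProd.1) (w2 : G.Walk d.toProd.2 v),
    w.length = w1.length + 1 + w2.length := by
  induction w with
  | nil => simp at hd
  | cons h p ih =>
    rw [SimpleGraph.Walk.darts_cons, List.mem_cons] at hd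
    rcases hd with rfl | hd
    · exact ⟨SimpleGraph.Walk.nil, p, by simp [Nat.add_comm]⟩
    · obtain ⟨w1, w2, hw⟩ := ih hd
      exact ⟨SimpleGraph.Walk.cons h w1, w2, by simp [hw]; omega⟩

lemma side_aux {V : Type*} {G : SimpleGraph V} (hG : G.Connected) {u v a b : V}
    (hab : G.Adj a b) (w1 : G.Walk u a) (w2 : G.Walk b v)
    (hlen : G.dist u v = w1.length + 1 + w2.length) :
    G.dist u a < G.dist u b ∧ G.dist v b < G.dist v a := by
  have h1 : G.dist u a ≤ w1.length := SimpleGraph.dist_le w1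
  have h2 : G.dist b v ≤ w2.length := SimpleGraph.dist_le w2
  have hab1 : G.dist a b = 1 := SimpleGraph.dist_eq_one_iff_adj.mpr hab
  have t1 : G.dist u v ≤ G.dist u a + G.dist a v := hG.dist_triangle
  have t2 : G.dist a v ≤ G.dist a b + G.dist b v := hG.dist_triangle
  have t3 : G.dist u v ≤ G.dist u b + G.dist b v := hG.dist_triangle
  have heq : G.dist u v = G.dist u a + 1 + G.dist b v := by omega
  have t4 : G.dist a v ≥ G.dist u v - G.dist u a := by omega
  constructor
  · omega
  · rw [show G.dist v b = G.dist b v from SimpleGraph.dist_comm,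
      show G.dist v a = G.dist a v from SimpleGraph.dist_comm]; omega

lemma side_of_mem_edges {n : ℕ} {G : SimpleGraph (Fin n)} (hG : G.Connected)
    (P : ShortestPathSystem G) {a b u v : Fin n} (hab : G.Adj a b)
    (h : s(a, b) ∈ (P.path u v).edges) :
    (G.dist u a < G.dist u b ∧ G.dist v b < G.dist v a) ∨
    (G.dist u b < G.dist u a ∧ G.dist v a < G.dist v b) := by
  simp only [SimpleGraph.Walk.edges, List.mem_map] at h
  obtain ⟨d, hd, he⟩ := h
  obtain ⟨w1, w2, hw⟩ := dart_split _ d hd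
  rw [P.length_eq u v] at hw
  have := Sym2.eq_iff.mp he
  rcases this with ⟨ha, hb⟩ | ⟨hb, ha⟩
  · left
    exact side_aux hG hab (ha ▸ w1) (hb ▸ w2) (by rw [hw]; subst ha hb; rfl)
  · right
    exact side_aux hG hab.symm (hb ▸ w1) (ha ▸ w2) (by rw [hw]; subst ha hb; rfl)

lemma mem_edges_of_length_one {V : Type*} {G : SimpleGraph V} {a b : V} (w : G.Walk a b)
    (h : w.length = 1) : s(a, b) ∈ w.edges := by
  cases w with
  | nil => simp at h
  | cons hadj p =>
    cases p with
    | nil => simp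
    | cons h' p' => simp [SimpleGraph.Walk.length_cons] at h

lemma double_sum_ite {n : ℕ} (A B : Finset (Fin n)) (D : ℝ) :
    ∑ u : Fin n, ∑ v : Fin n, (if u ∈ A ∧ v ∈ B then D else 0)
      = A.card * B.card * D := by
  have inner : ∀ u : Fin n, (∑ v : Fin n, if u ∈ A ∧ v ∈ B then D else 0)
      = if u ∈ A then (B.card : ℝ) * D else 0 := by
    intro u
    by_cases hu : u ∈ A
    · simp [hu, Finset.sum_ite_mem]
    · simp [hu]
  rw [Finset.sum_congr rfl fun u _ => inner u]
  simp [Finset.sum_ite_mem, mul_assoc]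

/-- The connection-graph-stability bound is at least as good as Mohar's bound:
`n / C_max ≥ 4 / (n · D_max)`. -/
theorem div_cgsScore_max_ge_mohar {n : ℕ} (G : SimpleGraph (Fin n)) [DecidableRel G.Adj]
    (hG : G.Connected) (hn : 2 ≤ n) (P : ShortestPathSystem G) (Cmax : ℝ)
    (hC : IsGreatest (cgsScore P '' G.edgeSet) Cmax) :
    4 / ((n : ℝ) * (G.diam : ℝ)) ≤ (n : ℝ) / Cmax := by
  obtain ⟨hmem, hub⟩ := hC
  obtain ⟨e, heE, heC⟩ := hmem
  revert heE heC
  refine Sym2.inductionOn e ?_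
  intro a b heE heC
  have hab : G.Adj a b := heE
  -- diameter facts
  have hnt : Nontrivial (Fin n) := Fin.nontrivial_iff_two_le.mpr hn
  have hTop : G.ediam ≠ ⊤ := by
    obtain ⟨u, v, huv⟩ := SimpleGraph.exists_edist_eq_ediam_of_finite (G := G)
    rw [← huv]
    exact SimpleGraph.edist_ne_top_iff_reachable.mpr (hG u v)
  have hD0 : G.diam ≠ 0 := by
    intro h
    rcases SimpleGraph.diam_eq_zero.mp h with h | h
    · exact hTop h
    · exact not_subsingleton _ h
  have hdistD : ∀ u v : Fin n, G.dist u v ≤ G.diam := fun u v =>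
    SimpleGraph.dist_le_diam hTop
  set D : ℝ := (G.diam : ℝ) with hD
  have hDpos : (0:ℝ) < D := by
    have : 1 ≤ G.diam := Nat.one_le_iff_ne_zero.mpr hD0
    rw [hD]
    exact_mod_cast Nat.lt_of_lt_of_le Nat.zero_lt_one this
  -- the two sides of the edge
  set A : Finset (Fin n) := Finset.univ.filter (fun w => G.dist w a < G.dist w b) with hA
  set B : Finset (Fin n) := Finset.univ.filter (fun w => G.dist w b < G.dist w a) with hB
  set S : ℝ := ∑ u : Fin n, ∑ v : Fin n,
    (if s(a,b) ∈ (P.path u v).edges then ((P.path u v).length : ℝ) else 0) with hS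
  have hCval : Cmax = (1/2) * S := heC.symm
  -- upper bound on S
  have hSle : S ≤ (A.card : ℝ) * B.card * D + (B.card : ℝ) * A.card * D := by
    rw [← double_sum_ite A B D, ← double_sum_ite B A D, ← Finset.sum_add_distrib]
    rw [hS]
    apply Finset.sum_le_sum
    intro u _
    rw [← Finset.sum_add_distrib]
    apply Finset.sum_le_sum
    intro v _
    by_cases h : s(a,b) ∈ (P.path u v).edges
    · rw [if_pos h]
      have hlen : ((P.path u v).length : ℝ) ≤ D := by
        rw [P.length_eq u v, hD]
        exact_mod_cast hdistD u v
      rcases side_of_mem_edges hG P hab h with ⟨h1, h2⟩ | ⟨h1, h2⟩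
      · have hu : u ∈ A := by simp [hA, h1]
        have hv : v ∈ B := by simp [hB, h2]
        rw [if_pos ⟨hu, hv⟩]
        have : (0:ℝ) ≤ if u ∈ B ∧ v ∈ A then D else 0 := by positivity
        linarith
      · have hu : u ∈ B := by simp [hB, h1]
        have hv : v ∈ A := by simp [hA, h2]
        rw [if_pos (show u ∈ B ∧ v ∈ A from ⟨hu, hv⟩)]
        have : (0:ℝ) ≤ if u ∈ A ∧ v ∈ B then D else 0 := by positivity
        linarith
    · rw [if_neg h]
      positivity
  -- cardinality bound
  have hcard : A.card + B.card ≤ n := by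
    have hdisj : Disjoint A B := by
      rw [Finset.disjoint_left]
      intro x hx hx'
      simp [hA] at hx; simp [hB] at hx'
      omega
    calc A.card + B.card = (A ∪ B).card := (Finset.card_union_of_disjoint hdisj).symm
    _ ≤ (Finset.univ : Finset (Fin n)).card := Finset.card_le_card (Finset.subset_univ _)
    _ = n := Finset.card_univ.trans (Fintype.card_fin n)
  -- positivity of Cmax
  have hterm : (1:ℝ) ≤ S := by
    have hmemab : s(a,b) ∈ (P.path a b).edges := by
      apply mem_edges_of_length_one
      rw [P.length_eq]
      exact SimpleGraph.dist_eq_one_iff_adj.mpr hab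
    have hgab : (1:ℝ) ≤ ∑ v : Fin n,
        (if s(a,b) ∈ (P.path a v).edges then ((P.path a v).length : ℝ) else 0) := by
      have := Finset.single_le_sum (f := fun v => if s(a,b) ∈ (P.path a v).edges
          then ((P.path a v).length : ℝ) else 0)
        (fun v _ => by positivity) (Finset.mem_univ b)
      have hval : (if s(a,b) ∈ (P.path a b).edges then ((P.path a b).length : ℝ) else 0)
          = 1 := by
        rw [if_pos hmemab, P.length_eq, SimpleGraph.dist_eq_one_iff_adj.mpr hab]
        norm_num
      exact le_trans (le_of_eq hval.symm) this
    rw [hS]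
    have := Finset.single_le_sum (f := fun u => ∑ v : Fin n,
        (if s(a,b) ∈ (P.path u v).edges then ((P.path u v).length : ℝ) else 0))
      (fun u _ => Finset.sum_nonneg fun v _ => by positivity) (Finset.mem_univ a)
    exact le_trans hgab this
  have hCpos : 0 < Cmax := by rw [hCval]; linarith
  -- final arithmetic
  have hnpos : (0:ℝ) < n := by
    have : (0:ℕ) < n := by omega
    exact_mod_cast this
  rw [div_le_div_iff₀ (by positivity) hCpos]
  have hx : (0:ℝ) ≤ (A.card : ℝ) := by positivity
  have hy : (0:ℝ) ≤ (B.card : ℝ) := by positivity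
  have hxy : (A.card : ℝ) + (B.card : ℝ) ≤ (n:ℝ) := by exact_mod_cast hcard
  have h5 : 4*((A.card:ℝ)*(B.card:ℝ)) ≤ (n:ℝ)*(n:ℝ) := by
    nlinarith [sq_nonneg ((A.card : ℝ) - (B.card : ℝ))]
  have h6 : 4*((A.card:ℝ)*(B.card:ℝ))*D ≤ (n:ℝ)*(n:ℝ)*D :=
    mul_le_mul_of_nonneg_right h5 hDpos.le
  nlinarith [h6, hSle, hCval]
end

section
/- For any connected simple graph G with n vertices, |E| edges, diameter D_max, and maximum connection-graph-stability score C_max, it holds that n / C_max ≥ 2n / (2 + n(n−1)D_max − 2|E|D_max); i.e., the connection-graph-stability bound is always at least as good as Lu's lower bound for λ₂. -/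
open SimpleGraph Finset

/-- The unique edge of a walk of length one. -/
lemma walk_length_one_edge {V : Type*} {G : SimpleGraph V} {u v : V}
    (p : G.Walk u v) (hp : p.length = 1) {e : Sym2 V} (he : e ∈ p.edges) :
    e = s(u, v) := by
  cases p with
  | nil => simp at hp
  | cons h q =>
    rw [SimpleGraph.Walk.length_cons] at hp
    have hq0 : q.length = 0 := by omega
    have hw := SimpleGraph.Walk.eq_of_length_eq_zero hq0
    subst hw
    have hqe : q.edges = [] := List.length_eq_zero_iff.mp
      (by rw [SimpleGraph.Walk.length_edges]; exact hq0)
    rw [SimpleGraph.Walk.edges_cons, hqe] at he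
    simpa using he

/-- The connection-graph-stability bound is at least as good as Lu's bound:
`n / C_max ≥ 2n / (2 + n(n−1)D_max − 2|E|D_max)`. -/
theorem div_cgsScore_max_ge_lu {n : ℕ} (G : SimpleGraph (Fin n)) [DecidableRel G.Adj]
    (hG : G.Connected) (hn : 2 ≤ n) (P : ShortestPathSystem G) (Cmax : ℝ)
    (hC : IsGreatest (cgsScore P '' G.edgeSet) Cmax) :
    2 * (n : ℝ) / (2 + (n : ℝ) * ((n : ℝ) - 1) * (G.diam : ℝ)
        - 2 * (G.edgeFinset.card : ℝ) * (G.diam : ℝ)) ≤ (n : ℝ) / Cmax := by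
  classical
  obtain ⟨e, heE, hCe⟩ := hC.1
  clear hC
  revert heE hCe
  induction e using Sym2.ind with
  | _ a b =>
  intro heE hCe
  have hab : G.Adj a b := heE
  have hne : a ≠ b := hab.ne
  haveI : Nontrivial (Fin n) := ⟨⟨⟨0, by omega⟩, ⟨1, by omega⟩, by simp [Fin.ext_iff]⟩⟩
  have hEd : G.ediam ≠ ⊤ := by
    obtain ⟨u, v, huv⟩ := SimpleGraph.exists_edist_eq_ediam_of_finite (G := G)
    rw [← huv]
    exact SimpleGraph.edist_ne_top_iff_reachable.mpr (hG u v)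
  set D : ℝ := (G.diam : ℝ) with hD
  have hD0 : 0 ≤ D := Nat.cast_nonneg _
  have hdiam : ∀ u v : Fin n, (G.dist u v : ℝ) ≤ D :=
    fun u v => Nat.cast_le.mpr (SimpleGraph.dist_le_diam hEd)
  set T : Fin n → Fin n → ℝ := fun u v =>
    if s(a,b) ∈ (P.path u v).edges then ((P.path u v).length : ℝ) else 0 with hT
  have hTnn : ∀ u v, 0 ≤ T u v := by
    intro u v; rw [hT]; dsimp only; split
    · exact Nat.cast_nonneg _
    · exact le_rfl
  -- T a b = 1
  have hpab : (P.path a b).length = 1 := by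
    rw [P.length_eq]; exact SimpleGraph.dist_eq_one_iff_adj.mpr hab
  have hmem : s(a,b) ∈ (P.path a b).edges := by
    obtain ⟨x, hx⟩ := List.length_eq_one_iff.mp
      (by rw [SimpleGraph.Walk.length_edges]; exact hpab)
    have hx' : x ∈ (P.path a b).edges := by rw [hx]; exact List.mem_singleton_self x
    have hxe := walk_length_one_edge _ hpab hx'
    exact hxe ▸ hx'
  have hTab : T a b = 1 := by
    rw [hT]; dsimp only; rw [if_pos hmem, hpab]; norm_num
  -- lower bound on the sum
  have hsum1 : (1:ℝ) ≤ ∑ u : Fin n, ∑ v : Fin n, T u v := by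
    have h1 : (1:ℝ) ≤ ∑ v : Fin n, T a v := by
      have := Finset.single_le_sum (f := T a) (fun v _ => hTnn a v) (Finset.mem_univ b)
      rw [hTab] at this; exact this
    calc (1:ℝ) ≤ ∑ v : Fin n, T a v := h1
      _ ≤ ∑ u : Fin n, ∑ v : Fin n, T u v :=
        Finset.single_le_sum (f := fun u => ∑ v : Fin n, T u v)
          (fun u _ => Finset.sum_nonneg fun v _ => hTnn u v) (Finset.mem_univ a)
  -- pointwise upper bound
  have hpoint : ∀ u v : Fin n, T u v ≤
      (if u ≠ v ∧ ¬ G.Adj u v then D else 0) +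
      (if G.Adj u v ∧ s(u,v) = s(a,b) then (1:ℝ) else 0) := by
    intro u v
    have hg1 : (0:ℝ) ≤ (if u ≠ v ∧ ¬ G.Adj u v then D else 0) := by split <;> simp [hD0]
    have hg2 : (0:ℝ) ≤ (if G.Adj u v ∧ s(u,v) = s(a,b) then (1:ℝ) else 0) := by
      split <;> norm_num
    by_cases huv : u = v
    · subst huv
      have h0 : (P.path u u).length = 0 := by rw [P.length_eq, SimpleGraph.dist_self]
      have : T u u = 0 := by rw [hT]; dsimp only; rw [h0]; simp
      rw [this]; linarith
    · by_cases hadj : G.Adj u v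
      · have h1 : (P.path u v).length = 1 := by
          rw [P.length_eq]; exact SimpleGraph.dist_eq_one_iff_adj.mpr hadj
        rw [hT]; dsimp only
        by_cases hin : s(a,b) ∈ (P.path u v).edges
        · have heq := walk_length_one_edge _ h1 hin
          have e2 : (if G.Adj u v ∧ s(u,v) = s(a,b) then (1:ℝ) else 0) = 1 :=
            if_pos ⟨hadj, heq.symm⟩
          have e1 : (if u ≠ v ∧ ¬ G.Adj u v then D else 0) = 0 := by
            rw [if_neg]; push_neg; intro _; exact hadj
          rw [if_pos hin, h1, e1, e2]; norm_num
        · rw [if_neg hin]; linarith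
      · have hle : T u v ≤ D := by
          rw [hT]; dsimp only
          split
          · rw [P.length_eq]; exact hdiam u v
          · exact hD0
        have : (if u ≠ v ∧ ¬ G.Adj u v then D else 0) = D := if_pos ⟨huv, hadj⟩
        rw [this]; linarith
  -- counting
  set A : Finset (Fin n × Fin n) :=
    Finset.univ.filter (fun p => p.1 ≠ p.2 ∧ ¬ G.Adj p.1 p.2) with hA
  set B : Finset (Fin n × Fin n) :=
    Finset.univ.filter (fun p => G.Adj p.1 p.2) with hB
  have hBcard : B.card = 2 * G.edgeFinset.card := by
    rw [SimpleGraph.two_mul_card_edgeFinset]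
  have hABcard : A.card + B.card ≤ n * n - n := by
    have hdisj : Disjoint A B := by
      rw [Finset.disjoint_left]
      intro p hpA hpB
      rw [hA, Finset.mem_filter] at hpA
      rw [hB, Finset.mem_filter] at hpB
      exact hpA.2.2 hpB.2
    have hsub : A ∪ B ⊆ Finset.univ.offDiag := by
      intro p hp
      rw [Finset.mem_union] at hp
      rw [Finset.mem_offDiag]
      rcases hp with hp | hp
      · rw [hA, Finset.mem_filter] at hp
        exact ⟨Finset.mem_univ _, Finset.mem_univ _, hp.2.1⟩
      · rw [hB, Finset.mem_filter] at hp
        exact ⟨Finset.mem_univ _, Finset.mem_univ _, hp.2.ne⟩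
    calc A.card + B.card = (A ∪ B).card := (Finset.card_union_of_disjoint hdisj).symm
      _ ≤ (Finset.univ : Finset (Fin n)).offDiag.card := Finset.card_le_card hsub
      _ = n * n - n := by rw [Finset.offDiag_card]; simp
  have hAcard : (A.card : ℝ) ≤ (n : ℝ) * ((n : ℝ) - 1) - 2 * (G.edgeFinset.card : ℝ) := by
    have h1 : A.card + 2 * G.edgeFinset.card ≤ n * n - n := by omega
    have hnn : n ≤ n * n := Nat.le_mul_of_pos_left n (by omega)
    have h2 : (A.card : ℝ) + 2 * (G.edgeFinset.card : ℝ) ≤ (n : ℝ) * (n : ℝ) - (n : ℝ) := by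
      have := (Nat.cast_le (α := ℝ)).mpr h1
      push_cast [Nat.cast_sub hnn] at this
      linarith
    nlinarith
  -- sum of first indicator
  have hf1 : ∑ u : Fin n, ∑ v : Fin n, (if u ≠ v ∧ ¬ G.Adj u v then D else 0)
      = (A.card : ℝ) * D := by
    rw [← Finset.sum_product', Finset.univ_product_univ, ← Finset.sum_filter,
      Finset.sum_const, nsmul_eq_mul]
  -- sum of second indicator
  have hf2 : ∑ u : Fin n, ∑ v : Fin n, (if G.Adj u v ∧ s(u,v) = s(a,b) then (1:ℝ) else 0)
      = 2 := by
    have hcond : ∀ u v : Fin n,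
        (G.Adj u v ∧ s(u,v) = s(a,b)) ↔ ((u = a ∧ v = b) ∨ (u = b ∧ v = a)) := by
      intro u v
      constructor
      · rintro ⟨-, h⟩
        rcases Sym2.eq_iff.mp h with ⟨rfl, rfl⟩ | ⟨rfl, rfl⟩
        · exact Or.inl ⟨rfl, rfl⟩
        · exact Or.inr ⟨rfl, rfl⟩
      · rintro (⟨rfl, rfl⟩ | ⟨rfl, rfl⟩)
        · exact ⟨hab, rfl⟩
        · exact ⟨hab.symm, Sym2.eq_swap⟩
    simp_rw [hcond]
    have hsplit : ∀ u v : Fin n, (if (u = a ∧ v = b) ∨ (u = b ∧ v = a) then (1:ℝ) else 0)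
        = (if u = a ∧ v = b then (1:ℝ) else 0) + (if u = b ∧ v = a then (1:ℝ) else 0) := by
      intro u v
      by_cases h1 : u = a ∧ v = b
      · have h2 : ¬(u = b ∧ v = a) := fun h2c => hne (h1.1.symm.trans h2c.1)
        simp only [h1, h2]
        simp
        exact fun h _ => hne h
      · by_cases h2 : u = b ∧ v = a
        · simp [h1, h2]
          exact fun _ h => hne h
        · simp [h1, h2]
    simp_rw [hsplit, Finset.sum_add_distrib, ite_and]
    simp
    norm_num
  -- assemble the upper bound on the sum
  have hsum_le : ∑ u : Fin n, ∑ v : Fin n, T u v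
      ≤ 2 + (n : ℝ) * ((n : ℝ) - 1) * D - 2 * (G.edgeFinset.card : ℝ) * D := by
    have step1 : ∑ u : Fin n, ∑ v : Fin n, T u v
        ≤ ∑ u : Fin n, ∑ v : Fin n, ((if u ≠ v ∧ ¬ G.Adj u v then D else 0) +
            (if G.Adj u v ∧ s(u,v) = s(a,b) then (1:ℝ) else 0)) :=
      Finset.sum_le_sum fun u _ => Finset.sum_le_sum fun v _ => hpoint u v
    have step2 : ∑ u : Fin n, ∑ v : Fin n, ((if u ≠ v ∧ ¬ G.Adj u v then D else 0) +
            (if G.Adj u v ∧ s(u,v) = s(a,b) then (1:ℝ) else 0))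
        = (A.card : ℝ) * D + 2 := by
      simp_rw [Finset.sum_add_distrib]
      rw [hf1, hf2]
    have step3 : (A.card : ℝ) * D ≤ ((n : ℝ) * ((n : ℝ) - 1) - 2 * (G.edgeFinset.card : ℝ)) * D :=
      mul_le_mul_of_nonneg_right hAcard hD0
    calc ∑ u : Fin n, ∑ v : Fin n, T u v ≤ (A.card : ℝ) * D + 2 := step2 ▸ step1
      _ ≤ 2 + (n : ℝ) * ((n : ℝ) - 1) * D - 2 * (G.edgeFinset.card : ℝ) * D := by nlinarith
  -- Cmax facts
  have hCval : Cmax = (1/2) * ∑ u : Fin n, ∑ v : Fin n, T u v := by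
    rw [← hCe, cgsScore]
  have hCpos : 0 < Cmax := by rw [hCval]; linarith
  have hkey : 2 * Cmax ≤ 2 + (n : ℝ) * ((n : ℝ) - 1) * D - 2 * (G.edgeFinset.card : ℝ) * D := by
    rw [hCval]; linarith
  have hden : 0 < 2 + (n : ℝ) * ((n : ℝ) - 1) * D - 2 * (G.edgeFinset.card : ℝ) * D := by
    linarith
  rw [div_le_div_iff₀ hden hCpos]
  have hn0 : (0:ℝ) ≤ (n : ℝ) := Nat.cast_nonneg n
  nlinarith [mul_le_mul_of_nonneg_left hkey hn0]
end

section
/- Mohar's bound: for every connected simple graph G on n vertices with diameter D_max, the algebraic connectivity satisfies λ₂ ≥ 4/(n · D_max). -/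
/-!
For `x ⊥ 𝟙` one has `∑ᵤ ∑ᵥ (xᵤ - xᵥ)² = 2n‖x‖²`. Fix a shortest path for every ordered pair
`(u, v)`; by Cauchy–Schwarz along it, `(xᵤ - xᵥ)² ≤ D_max · ∑ (xₐ - x_b)²` over its darts `(a, b)`.
A dart `(a, b)` on a shortest `u`–`v` path has `u` in `A = {w | d(w,a) < d(w,b)}` and `v` in
`B = {w | d(w,b) < d(w,a)}`, two disjoint sets, so it lies on at most `|A|·|B| ≤ n²/4` of the chosen
paths. Summing, `2n‖x‖² ≤ D_max · n²/4 · ∑_darts (xₐ - x_b)² = D_max · n²/2 · xᵀLx`. Finally some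
nonzero combination of eigenvectors for the two smallest eigenvalues is orthogonal to `𝟙`, and its
Rayleigh quotient is at most `λ₂`.
-/

open SimpleGraph Finset

open Matrix

lemma add_sq_le_succ_mul (n : ℕ) {s t S : ℝ} (hS : 0 ≤ S) (h : t ^ 2 ≤ n * S) :
    (s + t) ^ 2 ≤ (n + 1) * (s ^ 2 + S) := by
  rcases Nat.eq_zero_or_pos n with rfl | hn
  · obtain rfl : t = 0 := by simpa using h
    simpa using hS
  · have : (1 : ℝ) ≤ n := by exact_mod_cast hn
    nlinarith [sq_nonneg (n * s - t)]

namespace SimpleGraph.Walk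

variable {V : Type*} {G : SimpleGraph V} {u v : V}

lemma exists_walks_of_mem_darts (w : G.Walk u v) {d : G.Dart} (hd : d ∈ w.darts) :
    ∃ (p : G.Walk u d.fst) (q : G.Walk d.snd v), p.length + 1 + q.length = w.length := by
  induction w with
  | nil => simp at hd
  | @cons a b c h w ih =>
    rcases List.mem_cons.mp hd with rfl | hd
    · exact ⟨nil, w, by simp; omega⟩
    · obtain ⟨p, q, hpq⟩ := ih hd
      exact ⟨cons h p, q, by simp; omega⟩

lemma dist_lt_of_mem_darts {w : G.Walk u v} (hw : w.length = G.dist u v) {d : G.Dart}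
    (hd : d ∈ w.darts) :
    G.dist u d.fst < G.dist u d.snd ∧ G.dist d.snd v < G.dist d.fst v := by
  obtain ⟨p, q, hpq⟩ := w.exists_walks_of_mem_darts hd
  have hp := dist_le p
  have hq := dist_le q
  have hb := (p.concat d.adj).reachable.dist_triangle_left v
  have ha := p.reachable.dist_triangle_left v
  have := w.reachable
  omega

lemma sq_sub_le_length_mul_sum_darts (x : V → ℝ) (w : G.Walk u v) :
    (x u - x v) ^ 2 ≤ w.length * (w.darts.map fun d => (x d.fst - x d.snd) ^ 2).sum := by
  induction w with
  | nil => simp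
  | @cons a b c h w ih =>
    have hS : 0 ≤ (w.darts.map fun d => (x d.fst - x d.snd) ^ 2).sum :=
      List.sum_nonneg (by simp [sq_nonneg])
    rw [darts_cons, List.map_cons, List.sum_cons, length_cons, Nat.cast_succ,
      show x a - x c = (x a - x b) + (x b - x c) by ring]
    exact add_sq_le_succ_mul _ hS ih

end SimpleGraph.Walk

lemma sum_sum_sub_sq {ι : Type*} [Fintype ι] (x : ι → ℝ) :
    ∑ i, ∑ j, (x i - x j) ^ 2 = 2 * Fintype.card ι * ∑ i, x i ^ 2 - 2 * (∑ i, x i) ^ 2 := by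
  simp only [sub_sq, sum_add_distrib, sum_sub_distrib, sum_const, card_univ, nsmul_eq_mul,
    ← mul_sum, ← sum_mul]
  ring

namespace SimpleGraph

variable {V : Type*} {G : SimpleGraph V}

lemma sum_darts_eq_sum_sum_ite {M : Type*} [AddCommMonoid M] [Fintype V] [DecidableRel G.Adj]
    (f : V → V → M) :
    ∑ d : G.Dart, f d.fst d.snd = ∑ i, ∑ j, if G.Adj i j then f i j else 0 := by
  have himage : (univ : Finset G.Dart).map ⟨Dart.toProd, Dart.toProd_injective⟩
      = ({q : V × V | G.Adj q.1 q.2} : Finset (V × V)) := by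
    ext q
    simp only [mem_map, mem_univ, true_and, Function.Embedding.coeFn_mk, mem_filter]
    exact ⟨fun ⟨d, hd⟩ => hd ▸ d.adj, fun h => ⟨⟨q, h⟩, rfl⟩⟩
  rw [← Fintype.sum_prod_type', ← sum_filter, ← himage, sum_map]
  rfl

lemma dotProduct_lapMatrix_mulVec [Fintype V] [DecidableEq V] [DecidableRel G.Adj]
    (x : V → ℝ) :
    x ⬝ᵥ G.lapMatrix ℝ *ᵥ x = (∑ d : G.Dart, (x d.fst - x d.snd) ^ 2) / 2 := by
  rw [← toLinearMap₂'_apply', lapMatrix_toLinearMap₂',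
    sum_darts_eq_sum_sum_ite fun a b => (x a - x b) ^ 2]

lemma Walk.IsTrail.sq_sub_le_length_mul_sum_darts [Fintype V] [DecidableEq V]
    [DecidableRel G.Adj] {u v : V} {w : G.Walk u v} (hw : w.IsTrail) (x : V → ℝ) :
    (x u - x v) ^ 2
      ≤ w.length * ∑ d : G.Dart, if d ∈ w.darts then (x d.fst - x d.snd) ^ 2 else 0 := by
  convert w.sq_sub_le_length_mul_sum_darts x using 2
  rw [← List.sum_toFinset _ (hw.edges_nodup.of_map _), ← sum_filter]
  congr
  ext d
  simp

lemma four_mul_card_filter_mem_darts_le [Fintype V] [DecidableEq V] (p : ∀ u v : V, G.Walk u v)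
    (hp : ∀ u v, (p u v).length = G.dist u v) (d : G.Dart) :
    4 * #{q : V × V | d ∈ (p q.1 q.2).darts} ≤ Fintype.card V ^ 2 := by
  set A : Finset V := {w | G.dist w d.fst < G.dist w d.snd}
  set B : Finset V := {w | G.dist d.snd w < G.dist d.fst w}
  have hsub : ({q : V × V | d ∈ (p q.1 q.2).darts} : Finset (V × V)) ⊆ A ×ˢ B := by
    intro q hq
    simpa [A, B] using Walk.dist_lt_of_mem_darts (hp q.1 q.2) (mem_filter.mp hq).2
  have hdisj : Disjoint A B := by
    rw [Finset.disjoint_left]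
    intro w ha hb
    simp only [A, B, mem_filter, mem_univ, true_and, dist_comm (u := w)] at ha hb
    omega
  have hAB : #A + #B ≤ Fintype.card V := by
    rw [← card_union_of_disjoint hdisj]
    exact card_le_univ _
  calc 4 * #{q : V × V | d ∈ (p q.1 q.2).darts}
      ≤ 4 * #A * #B := by grw [card_le_card hsub, card_product, mul_assoc]
    _ ≤ (#A + #B) ^ 2 := four_mul_le_sq_add _ _
    _ ≤ Fintype.card V ^ 2 := by gcongr

theorem four_mul_sum_sq_le_card_mul_diam_mul [Fintype V] [DecidableEq V] [DecidableRel G.Adj]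
    (hG : G.Connected) {x : V → ℝ} (hx : ∑ i, x i = 0) :
    4 * ∑ i, x i ^ 2 ≤ Fintype.card V * G.diam * (x ⬝ᵥ G.lapMatrix ℝ *ᵥ x) := by
  have := hG.nonempty
  choose p hpath hlen using hG.exists_path_of_dist
  set n : ℝ := (Fintype.card V : ℝ)
  set D : ℝ := (G.diam : ℝ)
  set g : G.Dart → ℝ := fun d => (x d.fst - x d.snd) ^ 2
  set N : G.Dart → ℝ := fun d => (#{q : V × V | d ∈ (p q.1 q.2).darts} : ℕ)
  have hpair (u v : V) :
      (x u - x v) ^ 2 ≤ D * ∑ d : G.Dart, if d ∈ (p u v).darts then g d else 0 := by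
    have hlenD : ((p u v).length : ℝ) ≤ D := by
      simp only [hlen, D]
      exact_mod_cast G.dist_le_diam (connected_iff_ediam_ne_top.mp hG)
    exact ((hpath u v).isTrail.sq_sub_le_length_mul_sum_darts x).trans (by gcongr)
  have hswap : ∑ u, ∑ v, ∑ d : G.Dart, (if d ∈ (p u v).darts then g d else 0)
      = ∑ d, N d * g d := by
    rw [← Fintype.sum_prod_type', sum_comm]
    refine sum_congr rfl fun d _ => ?_
    rw [← sum_filter, sum_const, nsmul_eq_mul]
  have hcount (d : G.Dart) : 4 * N d ≤ n ^ 2 := by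
    simp only [N, n]
    exact_mod_cast four_mul_card_filter_mem_darts_le p hlen d
  have : 2 * n * (4 * ∑ i, x i ^ 2) ≤ 2 * n * (n * D * (x ⬝ᵥ G.lapMatrix ℝ *ᵥ x)) :=
    calc 2 * n * (4 * ∑ i, x i ^ 2) = 4 * ∑ u, ∑ v, (x u - x v) ^ 2 := by
          rw [sum_sum_sub_sq, hx]; ring
      _ ≤ 4 * (D * ∑ d, N d * g d) := by
          gcongr 4 * ?_
          rw [← hswap, mul_sum]
          refine sum_le_sum fun u _ => ?_
          rw [mul_sum]
          exact sum_le_sum fun v _ => hpair u v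
      _ ≤ D * ∑ d, n ^ 2 * g d := by
          rw [mul_left_comm, mul_sum]
          gcongr D * ∑ d, ?_ with d
          rw [← mul_assoc]
          exact mul_le_mul_of_nonneg_right (hcount d) (sq_nonneg _)
      _ = 2 * n * (n * D * (x ⬝ᵥ G.lapMatrix ℝ *ᵥ x)) := by
          rw [dotProduct_lapMatrix_mulVec, ← mul_sum]; ring
  exact le_of_mul_le_mul_left this (by positivity)

end SimpleGraph

lemma dotProduct_mulVec_add_smul_le {ι : Type*} [Fintype ι] {A : Matrix ι ι ℝ} {u w : ι → ℝ}
    {μ ν : ℝ} (hu : A *ᵥ u = μ • u) (hw : A *ᵥ w = ν • w) (huw : u ⬝ᵥ w = 0) (hμν : μ ≤ ν)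
    (a c : ℝ) :
    (a • u + c • w) ⬝ᵥ A *ᵥ (a • u + c • w) ≤ ν * ((a • u + c • w) ⬝ᵥ (a • u + c • w)) := by
  have hwu : w ⬝ᵥ u = 0 := by rw [dotProduct_comm, huw]
  have huu : 0 ≤ u ⬝ᵥ u := sum_nonneg fun i _ => mul_self_nonneg (u i)
  simp only [mulVec_add, mulVec_smul, hu, hw, dotProduct_add, add_dotProduct, dotProduct_smul,
    smul_dotProduct, huw, hwu, smul_eq_mul]
  nlinarith [mul_nonneg (mul_nonneg (sq_nonneg a) huu) (sub_nonneg.mpr hμν)]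

theorem Matrix.IsHermitian.le_eigenvalues_comp_sort_one {n : ℕ}
    {A : Matrix (Fin n) (Fin n) ℝ} (hA : A.IsHermitian) (hn : 1 < n) (y : Fin n → ℝ) {c : ℝ}
    (h : ∀ x, x ⬝ᵥ y = 0 → c * (x ⬝ᵥ x) ≤ x ⬝ᵥ A *ᵥ x) :
    c ≤ (hA.eigenvalues ∘ Tuple.sort hA.eigenvalues) ⟨1, hn⟩ := by
  set σ := Tuple.sort hA.eigenvalues
  set i := σ ⟨0, by omega⟩
  set j := σ ⟨1, hn⟩
  have hij : i ≠ j := σ.injective.ne (by simp)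
  have hle : hA.eigenvalues i ≤ hA.eigenvalues j :=
    Tuple.monotone_sort hA.eigenvalues (Fin.mk_le_mk.mpr zero_le_one)
  set u := ⇑(hA.eigenvectorBasis i)
  set w := ⇑(hA.eigenvectorBasis j)
  have horth (k l : Fin n) :
      ⇑(hA.eigenvectorBasis k) ⬝ᵥ ⇑(hA.eigenvectorBasis l) = if k = l then 1 else 0 := by
    simpa [EuclideanSpace.inner_eq_star_dotProduct, dotProduct_comm] using
      orthonormal_iff_ite.mp hA.eigenvectorBasis.orthonormal k l
  obtain ⟨a, b, hab, hpos⟩ : ∃ a b : ℝ, (a • u + b • w) ⬝ᵥ y = 0 ∧ 0 < a ^ 2 + b ^ 2 := by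
    by_cases hy : u ⬝ᵥ y = 0
    · exact ⟨1, 0, by simp [hy], by norm_num⟩
    · refine ⟨w ⬝ᵥ y, -(u ⬝ᵥ y), ?_,
        add_pos_of_nonneg_of_pos (sq_nonneg _) (by simpa [sq_pos_iff] using hy)⟩
      simp only [add_dotProduct, smul_dotProduct, smul_eq_mul]
      ring
  have hnorm : (a • u + b • w) ⬝ᵥ (a • u + b • w) = a ^ 2 + b ^ 2 := by
    simp only [dotProduct_add, add_dotProduct, dotProduct_smul, smul_dotProduct, smul_eq_mul,
      u, w, horth, if_neg hij, if_neg hij.symm, ↓reduceIte]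
    ring
  have hbound := (h _ hab).trans <| dotProduct_mulVec_add_smul_le
    (hA.mulVec_eigenvectorBasis i) (hA.mulVec_eigenvectorBasis j) (by simp [horth, hij]) hle a b
  rw [hnorm] at hbound
  exact le_of_mul_le_mul_right hbound hpos

/-- Mohar's lower bound: `λ₂ ≥ 4 / (n · D_max)`. -/
theorem mohar_bound {n : ℕ} (G : SimpleGraph (Fin n)) [DecidableRel G.Adj]
    (hG : G.Connected) (hn : 2 ≤ n) :
    4 / ((n : ℝ) * (G.diam : ℝ)) ≤ algebraicConnectivity G := by
  have : Nontrivial (Fin n) := Fin.nontrivial_iff_two_le.mpr hn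
  have hdiam : 0 < G.diam :=
    Nat.pos_of_ne_zero (diam_ne_zero_of_ediam_ne_top (connected_iff_ediam_ne_top.mp hG))
  rw [algebraicConnectivity, dif_pos (show 1 < n from hn)]
  refine (G.posSemidef_lapMatrix ℝ).1.le_eigenvalues_comp_sort_one hn 1 fun x hx => ?_
  have hmohar := four_mul_sum_sq_le_card_mul_diam_mul hG (x := x) (by rwa [dotProduct_one] at hx)
  rw [Fintype.card_fin] at hmohar
  have hself : x ⬝ᵥ x = ∑ i, x i ^ 2 := by simp only [dotProduct, sq]
  rw [hself, div_mul_eq_mul_div, div_le_iff₀ (by positivity)]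
  linarith
end

section
/- Lu's bound: for every connected simple graph G with n vertices, |E| edges and diameter D_max, the algebraic connectivity satisfies λ₂ ≥ 2n / (2 + (n−1)n·D_max − 2|E|·D_max). -/
open SimpleGraph Finset

/-!
For `x ⟂ 1` one has `∑ u, ∑ v, (x u - x v)² = 2n‖x‖²`. Cauchy–Schwarz along a fixed shortest
`u`–`v` path bounds `(x u - x v)²` by the path length times the sum of the squared differences
over its edges, so summing over all pairs charges each edge `e` with `2 * cgsScore e`, the total
length of the chosen paths through `e`. An adjacent pair is joined by its own edge, and each of
the `(n - 1)n - 2|E|` ordered pairs of distinct non-adjacent vertices by a path of length at most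
`D_max`, whence `2 * cgsScore e ≤ 2 + ((n - 1)n - 2|E|) D_max` and
`2n‖x‖² ≤ (2 + (n - 1)n D_max - 2|E| D_max) xᵀLx`. Courant–Fischer turns this into the bound
on `λ₂`.
-/

open Matrix

namespace Matrix.IsHermitian

variable {ι : Type*} [Fintype ι] [DecidableEq ι] {A : Matrix ι ι ℝ} (hA : A.IsHermitian)

lemma eigenvectorBasis_dotProduct (k l : ι) :
    (hA.eigenvectorBasis k).ofLp ⬝ᵥ (hA.eigenvectorBasis l).ofLp = if k = l then 1 else 0 := by
  have h := orthonormal_iff_ite.mp hA.eigenvectorBasis.orthonormal l k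
  rw [EuclideanSpace.inner_eq_star_dotProduct, star_trivial] at h
  simpa only [eq_comm] using h

lemma dotProduct_mulVec_eigenvectorBasis_pair {i j : ι} (hij : i ≠ j) (a b : ℝ) :
    let x := a • (hA.eigenvectorBasis i).ofLp + b • (hA.eigenvectorBasis j).ofLp
    x ⬝ᵥ x = a ^ 2 + b ^ 2 ∧
      x ⬝ᵥ A *ᵥ x = a ^ 2 * hA.eigenvalues i + b ^ 2 * hA.eigenvalues j := by
  simp only [mulVec_add, mulVec_smul, mulVec_eigenvectorBasis, add_dotProduct, dotProduct_add,
    smul_dotProduct, dotProduct_smul, eigenvectorBasis_dotProduct, hij, hij.symm]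
  constructor <;> simp <;> ring

end Matrix.IsHermitian

/- The easy half of Courant–Fischer: the span of the eigenvectors of the two smallest eigenvalues
meets every hyperplane, and on that span the quadratic form is at most the second eigenvalue. -/
lemma Matrix.IsHermitian.le_eigenvalues_sort_one {n : ℕ} {A : Matrix (Fin n) (Fin n) ℝ}
    (hA : A.IsHermitian) (hn : 1 < n) (w : Fin n → ℝ) {c : ℝ}
    (h : ∀ x, w ⬝ᵥ x = 0 → c * (x ⬝ᵥ x) ≤ x ⬝ᵥ A *ᵥ x) :
    c ≤ (hA.eigenvalues ∘ Tuple.sort hA.eigenvalues) ⟨1, hn⟩ := by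
  set i := Tuple.sort hA.eigenvalues ⟨0, by omega⟩
  set j := Tuple.sort hA.eigenvalues ⟨1, hn⟩
  have hij : i ≠ j := fun h => by simpa using (Tuple.sort hA.eigenvalues).injective h
  have hμ : hA.eigenvalues i ≤ hA.eigenvalues j :=
    Tuple.monotone_sort hA.eigenvalues (Fin.mk_le_mk.mpr zero_le_one)
  set p := w ⬝ᵥ (hA.eigenvectorBasis i).ofLp
  set q := w ⬝ᵥ (hA.eigenvectorBasis j).ofLp
  obtain ⟨a, b, hab, hw⟩ : ∃ a b : ℝ, 0 < a ^ 2 + b ^ 2 ∧ a * p + b * q = 0 := by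
    by_cases hq : q = 0
    · exact ⟨0, 1, by norm_num, by simp [hq]⟩
    · exact ⟨q, -p, by positivity, by ring⟩
  obtain ⟨hxx, hxAx⟩ := hA.dotProduct_mulVec_eigenvectorBasis_pair hij a b
  have hx := h (a • (hA.eigenvectorBasis i).ofLp + b • (hA.eigenvectorBasis j).ofLp)
    (by rwa [dotProduct_add, dotProduct_smul, dotProduct_smul, smul_eq_mul, smul_eq_mul])
  rw [hxx, hxAx] at hx
  refine le_of_mul_le_mul_right (hx.trans ?_) hab
  change _ ≤ hA.eigenvalues j * _
  nlinarith [mul_le_mul_of_nonneg_left hμ (sq_nonneg a)]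

lemma le_algebraicConnectivity {n : ℕ} (G : SimpleGraph (Fin n)) [DecidableRel G.Adj]
    (hn : 1 < n) {c : ℝ}
    (h : ∀ x : Fin n → ℝ, ∑ i, x i = 0 → c * (x ⬝ᵥ x) ≤ x ⬝ᵥ G.lapMatrix ℝ *ᵥ x) :
    c ≤ algebraicConnectivity G := by
  rw [algebraicConnectivity, dif_pos hn]
  exact (G.posSemidef_lapMatrix ℝ).1.le_eigenvalues_sort_one hn 1
    fun x hx => h x (by rwa [one_dotProduct] at hx)

lemma List.sq_sum_le_length_mul_sum_sq {R : Type*} [CommSemiring R] [LinearOrder R]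
    [IsStrictOrderedRing R] [ExistsAddOfLE R] (l : List R) :
    l.sum ^ 2 ≤ l.length * (l.map (· ^ 2)).sum := by
  have h := sq_sum_le_card_mul_sum_sq (s := univ) (f := fun i : Fin l.length => l[i.1])
  rwa [Fin.sum_univ_getElem, Fin.sum_univ_fun_getElem l (· ^ 2), card_univ,
    Fintype.card_fin] at h

namespace SimpleGraph

variable {V : Type*}

namespace Walk

variable {G : SimpleGraph V}

lemma sub_eq_sum_darts (x : V → ℝ) {u v : V} (p : G.Walk u v) :
    x u - x v = (p.darts.map fun d => x d.fst - x d.snd).sum := by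
  induction p with
  | nil => simp
  | cons h q ih =>
    rw [darts_cons, List.map_cons, List.sum_cons, ← ih]
    ring

lemma sq_sub_le_length_mul_sum_edgeSq_s18 (x : V → ℝ) {u v : V} (p : G.Walk u v) :
    (x u - x v) ^ 2 ≤ p.length * (p.edges.map (edgeSq x)).sum := by
  have h := List.sq_sum_le_length_mul_sum_sq (p.darts.map fun d => x d.fst - x d.snd)
  rw [← sub_eq_sum_darts, List.length_map, length_darts, List.map_map] at h
  rwa [edges, List.map_map]

lemma IsTrail.sq_sub_le_sum_edgeSq_mul [Fintype V] [DecidableEq V] (x : V → ℝ) {u v : V}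
    {p : G.Walk u v} (hp : p.IsTrail) :
    (x u - x v) ^ 2 ≤ ∑ e, edgeSq x e * (if e ∈ p.edges then (p.length : ℝ) else 0) := by
  have hsum : (p.edges.map (edgeSq x)).sum = ∑ e ∈ p.edges.toFinset, edgeSq x e :=
    (List.sum_toFinset _ hp.edges_nodup).symm
  refine (p.sq_sub_le_length_mul_sum_edgeSq_s18 x).trans_eq ?_
  simp_rw [hsum, mul_ite, mul_zero, ← Finset.sum_filter, mul_sum, mul_comm (p.length : ℝ)]
  congr 1
  ext e
  simp

lemma edges_eq_of_length_eq_one {u v : V} (p : G.Walk u v) (h : p.length = 1) :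
    p.edges = [s(u, v)] := by
  cases p with
  | nil => simp at h
  | cons _ q => cases q with
    | nil => simp
    | cons => simp at h

end Walk

variable [Fintype V] (G : SimpleGraph V) [DecidableRel G.Adj]

lemma sum_sum_ite_adj_eq_two_nsmul {M : Type*} [AddCommMonoid M] (f : Sym2 V → M) :
    ∑ u, ∑ v, (if G.Adj u v then f s(u, v) else 0) = 2 • ∑ e ∈ G.edgeFinset, f e := by
  classical
  calc ∑ u, ∑ v, (if G.Adj u v then f s(u, v) else 0)
      = ∑ d : G.Dart, f d.edge := by
        rw [← Fintype.sum_prod_type', ← sum_filter]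
        exact (sum_bij (fun d _ => d.toProd) (fun d _ => by simp [d.adj])
          (fun d₁ _ d₂ _ h => Dart.toProd_injective h)
          (fun p hp => ⟨⟨p, (mem_filter.mp hp).2⟩, mem_univ _, rfl⟩) (fun d _ => rfl)).symm
    _ = ∑ e ∈ G.edgeFinset, ∑ d ∈ {d : G.Dart | d.edge = e}, f d.edge :=
        (sum_fiberwise_of_maps_to (fun d _ => mem_edgeFinset.mpr d.edge_mem) _).symm
    _ = ∑ e ∈ G.edgeFinset, 2 • f e := sum_congr rfl fun e he => by
        rw [sum_congr rfl fun d hd => by rw [(mem_filter.mp hd).2], sum_const,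
          G.dart_edge_fiber_card e (mem_edgeFinset.mp he)]
    _ = 2 • ∑ e ∈ G.edgeFinset, f e := (smul_sum ..).symm

lemma dotProduct_lapMatrix_mulVec_s18 [DecidableEq V] (x : V → ℝ) :
    x ⬝ᵥ G.lapMatrix ℝ *ᵥ x = ∑ e ∈ G.edgeFinset, edgeSq x e := by
  have h := G.sum_sum_ite_adj_eq_two_nsmul (edgeSq x)
  simp only [edgeSq_mk, nsmul_eq_mul, Nat.cast_ofNat] at h
  rw [← toLinearMap₂'_apply', lapMatrix_toLinearMap₂', h]
  ring

lemma two_mul_card_edgeFinset_le :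
    2 * (#G.edgeFinset : ℝ) ≤ (Fintype.card V - 1) * Fintype.card V := by
  have h : (#G.edgeFinset : ℝ) ≤ (Fintype.card V).choose 2 :=
    Nat.cast_le.mpr G.card_edgeFinset_le_card_choose_two
  rw [Nat.cast_choose_two] at h
  linarith

end SimpleGraph

lemma sum_sum_sq_sub_of_sum_eq_zero {V : Type*} [Fintype V] (x : V → ℝ) (hx : ∑ i, x i = 0) :
    ∑ u, ∑ v, (x u - x v) ^ 2 = 2 * Fintype.card V * (x ⬝ᵥ x) := by
  simp only [sub_sq, sum_add_distrib, sum_sub_distrib, sum_const, card_univ, nsmul_eq_mul,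
    mul_assoc, ← mul_sum, ← sum_mul, hx, dotProduct]
  ring_nf

namespace ShortestPathSystem

variable {n : ℕ} {G : SimpleGraph (Fin n)}

noncomputable def ofConnected (hG : G.Connected) : ShortestPathSystem G where
  path u v := (hG.exists_path_of_dist u v).choose
  isPath u v := (hG.exists_path_of_dist u v).choose_spec.1
  length_eq u v := (hG.exists_path_of_dist u v).choose_spec.2

lemma two_mul_cgsScore_eq (P : ShortestPathSystem G) (e : Sym2 (Fin n)) :
    2 * cgsScore P e
      = ∑ u, ∑ v, if e ∈ (P.path u v).edges then ((P.path u v).length : ℝ) else 0 := by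
  rw [cgsScore]
  ring

lemma cgsScore_eq_zero_of_notMem (P : ShortestPathSystem G) {e : Sym2 (Fin n)}
    (he : e ∉ G.edgeSet) : cgsScore P e = 0 := by
  have h := P.two_mul_cgsScore_eq e
  rw [sum_eq_zero fun u _ => sum_eq_zero fun v _ =>
    if_neg fun hmem => he ((P.path u v).edges_subset_edgeSet hmem)] at h
  linarith

lemma sum_sum_sq_sub_le [DecidableRel G.Adj] (P : ShortestPathSystem G) (x : Fin n → ℝ) :
    ∑ u, ∑ v, (x u - x v) ^ 2 ≤ ∑ e ∈ G.edgeFinset, edgeSq x e * (2 * cgsScore P e) := by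
  calc ∑ u, ∑ v, (x u - x v) ^ 2
      ≤ ∑ u, ∑ v, ∑ e, edgeSq x e *
          (if e ∈ (P.path u v).edges then ((P.path u v).length : ℝ) else 0) :=
        sum_le_sum fun u _ => sum_le_sum fun v _ =>
          (P.isPath u v).isTrail.sq_sub_le_sum_edgeSq_mul x
    _ = ∑ e, edgeSq x e * (2 * cgsScore P e) := by
        simp_rw [two_mul_cgsScore_eq, mul_sum]
        exact (sum_congr rfl fun _ _ => sum_comm).trans sum_comm
    _ = ∑ e ∈ G.edgeFinset, edgeSq x e * (2 * cgsScore P e) := by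
        refine (sum_subset (subset_univ _) fun e _ he => ?_).symm
        rw [P.cgsScore_eq_zero_of_notMem (mt mem_edgeFinset.mpr he), mul_zero, mul_zero]

/- Adjacent pairs are joined by the edge itself, all other pairs of distinct vertices by a path of
length at most the diameter. -/
lemma ite_mem_edges_le [DecidableRel G.Adj] (P : ShortestPathSystem G)
    (hdiam : ∀ u v, G.dist u v ≤ G.diam) (e : Sym2 (Fin n)) (u v : Fin n) :
    (if e ∈ (P.path u v).edges then ((P.path u v).length : ℝ) else 0)
      ≤ (if G.Adj u v then (if e = s(u, v) then 1 else 0) else 0)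
        + (1 - (if u = v then 1 else 0) - (if G.Adj u v then 1 else 0)) * G.diam := by
  have hlen : ((P.path u v).length : ℝ) ≤ G.diam := by exact_mod_cast P.length_eq u v ▸ hdiam u v
  by_cases huv : u = v
  · subst huv
    have h0 : (P.path u u).length = 0 := by rw [P.length_eq, dist_self]
    simp [h0]
  by_cases hadj : G.Adj u v
  · have hlen1 : (P.path u v).length = 1 := by rw [P.length_eq, dist_eq_one_iff_adj.mpr hadj]
    simp [hadj, huv, hlen1, Walk.edges_eq_of_length_eq_one _ hlen1]
  · simp only [hadj, huv, if_false, sub_zero, one_mul, zero_add]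
    split_ifs
    · exact hlen
    · exact Nat.cast_nonneg _ |>.trans hlen

lemma two_mul_cgsScore_le [DecidableRel G.Adj] (hG : G.Connected) (P : ShortestPathSystem G)
    {e : Sym2 (Fin n)} (he : e ∈ G.edgeSet) :
    2 * cgsScore P e
      ≤ 2 + ((n : ℝ) - 1) * n * G.diam - 2 * #G.edgeFinset * G.diam := by
  have : Nonempty (Fin n) := hG.nonempty
  have hdiam u v : G.dist u v ≤ G.diam := G.dist_le_diam (connected_iff_ediam_ne_top.mp hG)
  have hadj : ∑ u, ∑ v, (if G.Adj u v then (1 : ℝ) else 0) = 2 * #G.edgeFinset := by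
    simpa using G.sum_sum_ite_adj_eq_two_nsmul fun _ => (1 : ℝ)
  have hedge : ∑ u, ∑ v, (if G.Adj u v then (if e = s(u, v) then (1 : ℝ) else 0) else 0) = 2 := by
    simpa [mem_edgeFinset.mpr he] using
      G.sum_sum_ite_adj_eq_two_nsmul fun e' => if e = e' then (1 : ℝ) else 0
  rw [two_mul_cgsScore_eq]
  refine (sum_le_sum fun u _ => sum_le_sum fun v _ => P.ite_mem_edges_le hdiam e u v).trans_eq ?_
  simp only [sum_add_distrib, ← sum_mul, sum_sub_distrib, sum_ite_eq, hadj, hedge, sum_const,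
    card_univ, Fintype.card_fin, nsmul_eq_mul, mul_one, mem_univ, if_true]
  ring

end ShortestPathSystem

theorem two_mul_card_mul_dotProduct_le {n : ℕ} (G : SimpleGraph (Fin n)) [DecidableRel G.Adj]
    (hG : G.Connected) (x : Fin n → ℝ) (hx : ∑ i, x i = 0) :
    2 * n * (x ⬝ᵥ x) ≤ (2 + ((n : ℝ) - 1) * n * G.diam - 2 * #G.edgeFinset * G.diam)
      * (x ⬝ᵥ G.lapMatrix ℝ *ᵥ x) := by
  let P := ShortestPathSystem.ofConnected hG
  calc 2 * n * (x ⬝ᵥ x)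
      = ∑ u, ∑ v, (x u - x v) ^ 2 := by
        rw [sum_sum_sq_sub_of_sum_eq_zero x hx, Fintype.card_fin]
    _ ≤ ∑ e ∈ G.edgeFinset, edgeSq x e * (2 * cgsScore P e) := P.sum_sum_sq_sub_le x
    _ ≤ ∑ e ∈ G.edgeFinset, edgeSq x e *
          (2 + ((n : ℝ) - 1) * n * G.diam - 2 * #G.edgeFinset * G.diam) :=
        sum_le_sum fun e he => mul_le_mul_of_nonneg_left
          (P.two_mul_cgsScore_le hG (mem_edgeFinset.mp he)) (edgeSq_nonneg x e)
    _ = _ := by rw [← sum_mul, G.dotProduct_lapMatrix_mulVec_s18, mul_comm]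

/-- Lu's lower bound: `λ₂ ≥ 2n / (2 + (n−1)n·D_max − 2|E|·D_max)`. -/
theorem lu_bound {n : ℕ} (G : SimpleGraph (Fin n)) [DecidableRel G.Adj]
    (hG : G.Connected) (hn : 2 ≤ n) :
    2 * (n : ℝ) / (2 + ((n : ℝ) - 1) * (n : ℝ) * (G.diam : ℝ)
        - 2 * (G.edgeFinset.card : ℝ) * (G.diam : ℝ)) ≤ algebraicConnectivity G := by
  have hE := G.two_mul_card_edgeFinset_le
  rw [Fintype.card_fin] at hE
  have hdenom : 0 < 2 + ((n : ℝ) - 1) * n * G.diam - 2 * #G.edgeFinset * G.diam := by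
    nlinarith [mul_le_mul_of_nonneg_right hE (Nat.cast_nonneg (α := ℝ) G.diam)]
  refine le_algebraicConnectivity G hn fun x hx => ?_
  rw [div_mul_eq_mul_div, div_le_iff₀ hdenom]
  linear_combination two_mul_card_mul_dotProduct_le G hG x hx
end

section
/- For any vector x on the vertices of a connected simple graph G with a fixed system of shortest paths {P_{uv}} and associated edge scores C_e, Σ_{u∈V} Σ_{v∈V} (x_u − x_v)² ≤ 2 Σ_{e∈E} C_e (x_a − x_b)², where for an edge e = ab, (x_a − x_b)² is the squared difference across e. -/
open SimpleGraph Finset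

/-- For any vector `x` and any fixed system of shortest paths,
`Σ_u Σ_v (x_u − x_v)² ≤ 2 Σ_{e∈E} C_e (x_a − x_b)²`. -/
theorem sum_sq_sub_le_cgs {n : ℕ} (G : SimpleGraph (Fin n)) [DecidableRel G.Adj]
    (hG : G.Connected) (P : ShortestPathSystem G) (x : Fin n → ℝ) :
    ∑ u : Fin n, ∑ v : Fin n, (x u - x v)^2 ≤
      2 * ∑ e ∈ G.edgeFinset, cgsScore P e * edgeSq x e := by
  classical
  -- per-pair Cauchy–Schwarz along the path
  have hedgeSq_nonneg : ∀ e : Sym2 (Fin n), 0 ≤ edgeSq x e := by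
    intro e
    induction e using Sym2.ind with
    | _ a b => simpa [edgeSq] using sq_nonneg (x a - x b)
  have key : ∀ {u v : Fin n} (w : G.Walk u v),
      (x u - x v)^2 ≤ (w.length : ℝ) * ((w.edges.map (edgeSq x)).sum) := by
    intro u v w
    induction w with
    | nil => simp
    | @cons a b c h w ih =>
      have hS : 0 ≤ ((w.edges.map (edgeSq x)).sum) :=
        List.sum_nonneg (by
          intro y hy
          obtain ⟨e, _, rfl⟩ := List.mem_map.mp hy
          exact hedgeSq_nonneg e)
      have hk : (0:ℝ) ≤ (w.length : ℝ) := by positivity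
      have hD : (x b - x c)^2 ≤ (w.length : ℝ) * ((w.edges.map (edgeSq x)).sum) := ih
      have hD0 : w.length = 0 → x b = x c := by
        intro h0
        have := (SimpleGraph.Walk.eq_of_length_eq_zero h0)
        subst this; rfl
      simp only [SimpleGraph.Walk.edges_cons, SimpleGraph.Walk.length_cons,
        List.map_cons, List.sum_cons, Nat.cast_add, Nat.cast_one]
      have he : edgeSq x s(a, b) = (x a - x b)^2 := by simp [edgeSq]
      rw [he]
      set d := x a - x b with hd
      set D := x b - x c with hDdef
      set k := (w.length : ℝ) with hkdef
      set S := ((w.edges.map (edgeSq x)).sum) with hSdef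
      have hxac : x a - x c = d + D := by rw [hd, hDdef]; ring
      rw [hxac]
      rcases eq_or_lt_of_le hk with hk0 | hkpos
      · have hL : (w.length : ℝ) = 0 := by rw [← hkdef, ← hk0]
        have : w.length = 0 := by exact_mod_cast hL
        have hDz : D = 0 := by rw [hDdef, hD0 this]; ring
        rw [← hk0, hDz]
        nlinarith [sq_nonneg d]
      · nlinarith [sq_nonneg (k * d - D), mul_pos hkpos hkpos, sq_nonneg d,
          mul_le_mul_of_nonneg_left hD hk]
  -- rewrite RHS as a double sum over pairs
  have hRHS : 2 * ∑ e ∈ G.edgeFinset, cgsScore P e * edgeSq x e =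
      ∑ u : Fin n, ∑ v : Fin n, ∑ e ∈ G.edgeFinset,
        (if e ∈ (P.path u v).edges then ((P.path u v).length : ℝ) * edgeSq x e else 0) := by
    rw [Finset.mul_sum]
    have step : ∀ e ∈ G.edgeFinset, 2 * (cgsScore P e * edgeSq x e) =
        ∑ u : Fin n, ∑ v : Fin n,
          (if e ∈ (P.path u v).edges then ((P.path u v).length : ℝ) * edgeSq x e else 0) := by
      intro e _
      rw [cgsScore]
      rw [show 2 * (1/2 * (∑ u : Fin n, ∑ v : Fin n,
          (if e ∈ (P.path u v).edges then ((P.path u v).length : ℝ) else 0)) * edgeSq x e)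
        = (∑ u : Fin n, ∑ v : Fin n,
          (if e ∈ (P.path u v).edges then ((P.path u v).length : ℝ) else 0)) * edgeSq x e
        from by ring]
      rw [Finset.sum_mul]
      refine Finset.sum_congr rfl fun u _ => ?_
      rw [Finset.sum_mul]
      refine Finset.sum_congr rfl fun v _ => ?_
      rw [ite_mul, zero_mul]
    rw [Finset.sum_congr rfl step, Finset.sum_comm]
    refine Finset.sum_congr rfl fun u _ => ?_
    rw [Finset.sum_comm]
  rw [hRHS]
  refine Finset.sum_le_sum fun u _ => Finset.sum_le_sum fun v _ => ?_
  set w := P.path u v with hw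
  have hsub : ∀ e ∈ w.edges, e ∈ G.edgeFinset := fun e he =>
    SimpleGraph.mem_edgeFinset.mpr (w.edges_subset_edgeSet he)
  have hnd : w.edges.Nodup := (P.isPath u v).edges_nodup
  have hfilter : G.edgeFinset.filter (· ∈ w.edges) = w.edges.toFinset := by
    ext e
    simp only [Finset.mem_filter, List.mem_toFinset]
    exact ⟨fun h => h.2, fun h => ⟨hsub e h, h⟩⟩
  calc (x u - x v)^2 ≤ (w.length : ℝ) * ((w.edges.map (edgeSq x)).sum) := key w
    _ = (w.length : ℝ) * ∑ e ∈ w.edges.toFinset, edgeSq x e := by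
        rw [List.sum_toFinset _ hnd]
    _ = ∑ e ∈ w.edges.toFinset, (w.length : ℝ) * edgeSq x e := by rw [Finset.mul_sum]
    _ = ∑ e ∈ G.edgeFinset.filter (· ∈ w.edges), (w.length : ℝ) * edgeSq x e := by
        rw [hfilter]
    _ = ∑ e ∈ G.edgeFinset,
          (if e ∈ w.edges then (w.length : ℝ) * edgeSq x e else 0) := by
        rw [Finset.sum_filter]
end
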